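/- Let T: 𝕋 → 𝕋 be a continuous map that is monotone increasing on each interval [x_k, x_{k+1}) of a partition 0 = x₀ < ⋯ < x_d = 1, with T(x_k) = 0 and left limit 1 at x_{k+1}. Let ι be the itinerary map into {0,…,d−1}^ℕ with the product topology. If x₀ ∈ 𝕋 has itinerary ι(x₀) not terminating in an infinite string of 0's, then ι is continuous at x₀. -/

import Mathlib

/-! A point of the circle sitting exactly at a left endpoint `x k` is sent by `T` to `0`, which
`T` fixes and which has itinerary digit `0`; so an itinerary that does not end in `0`s keeps
every iterate `Tⁿ z₀` in the open interval `(x k, x (k+1))` of its digit. Since `rep` is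
continuous away from `0` and `Tⁿ` is continuous, nearby points have the same `n`-th digit. -/

open Set Filter MeasureTheory

noncomputable def rep (z : UnitAddCircle) : ℝ := (AddCircle.equivIco 1 0 z : ℝ)

def MinimalOn (T : UnitAddCircle → UnitAddCircle) (X : Set UnitAddCircle) : Prop :=
  ∀ x ∈ X, ∀ y ∈ X, y ∈ closure {z : UnitAddCircle | ∃ n : ℕ, T^[n] x = z}

def PreservesCyclicOrder (T : UnitAddCircle → UnitAddCircle) (X : Set UnitAddCircle) : Prop :=
  ∀ p ∈ X, ∀ q ∈ X, ∀ r ∈ X,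
    T p ≠ T q → T q ≠ T r → T r ≠ T p →
    sbtw p q r → sbtw (T p) (T q) (T r)

def IsRotational (T : UnitAddCircle → UnitAddCircle) (X : Set UnitAddCircle) : Prop :=
  IsClosed X ∧ Set.MapsTo T X X ∧ MinimalOn T X ∧ PreservesCyclicOrder T X

open Topology

lemma coe_rep (z : UnitAddCircle) : ((rep z : ℝ) : UnitAddCircle) = z :=
  (AddCircle.equivIco 1 0).symm_apply_apply z

lemma rep_zero : rep 0 = 0 := by
  simpa [rep] using AddCircle.coe_equivIco_mk_apply (𝕜 := ℝ) (p := 1) 0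

lemma continuousAt_rep {z : UnitAddCircle} (hz : z ≠ 0) : ContinuousAt rep z :=
  continuous_subtype_val.continuousAt.comp
    (AddCircle.continuousAt_equivIco 1 0 (by simpa using hz))

lemma eventually_rep_mem_Ioo {a b : ℝ} (ha : 0 ≤ a) {z : UnitAddCircle} (hz : rep z ∈ Ioo a b) :
    ∀ᶠ w in 𝓝 z, rep w ∈ Ioo a b := by
  have hz0 : z ≠ 0 := by
    rintro rfl
    exact (rep_zero ▸ hz.1).not_ge ha
  exact continuousAt_rep hz0 (isOpen_Ioo.mem_nhds hz)

lemma Function.iterate_eq_of_le_of_iterate_eq_fixed {α : Type*} {f : α → α} {p z : α}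
    (hp : f p = p) {n m : ℕ} (hnm : n ≤ m) (h : f^[n] z = p) : f^[m] z = p := by
  obtain ⟨j, rfl⟩ := Nat.exists_eq_add_of_le hnm
  rw [add_comm, Function.iterate_add_apply, h, Function.iterate_fixed hp]

section Itinerary

variable {d : ℕ} {x : Fin (d + 1) → ℝ} {T : UnitAddCircle → UnitAddCircle}
  {ι : UnitAddCircle → ℕ → Fin d}

lemma itinerary_eq_zero_of_iterate_eq_zero (hd : 0 < d) (hxmono : StrictMono x) (hx0 : x 0 = 0)
    (hι : ∀ z : UnitAddCircle, ∀ n : ℕ, ∀ kk : Fin d,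
        ι z n = kk ↔ rep (T^[n] z) ∈ Ico (x kk.castSucc) (x kk.succ))
    {z : UnitAddCircle} {m : ℕ} (h : T^[m] z = 0) : (ι z m : ℕ) = 0 := by
  have hx1 : 0 < x (⟨0, hd⟩ : Fin d).succ := hx0 ▸ hxmono (Fin.succ_pos _)
  have : ι z m = ⟨0, hd⟩ := (hι z m _).2 ⟨by simp [h, rep_zero, hx0], by simpa [h, rep_zero]⟩
  simp [this]

lemma itinerary_eventually_zero_of_iterate_eq_left_endpoint (hd : 0 < d) (hxmono : StrictMono x)
    (hx0 : x 0 = 0) (hT0 : ∀ k : Fin d, T ((x k.castSucc : ℝ) : UnitAddCircle) = 0)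
    (hι : ∀ z : UnitAddCircle, ∀ n : ℕ, ∀ kk : Fin d,
        ι z n = kk ↔ rep (T^[n] z) ∈ Ico (x kk.castSucc) (x kk.succ))
    {z : UnitAddCircle} {n : ℕ} {k : Fin d} (h : T^[n] z = x k.castSucc) {m : ℕ} (hnm : n < m) :
    (ι z m : ℕ) = 0 := by
  have hT00 : T 0 = 0 := by simpa [hx0] using hT0 ⟨0, hd⟩
  have hnext : T^[n + 1] z = 0 := by rw [Function.iterate_succ_apply', h, hT0]
  exact itinerary_eq_zero_of_iterate_eq_zero hd hxmono hx0 hι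
    (Function.iterate_eq_of_le_of_iterate_eq_fixed hT00 hnm hnext)

lemma left_endpoint_lt_rep_iterate (hd : 0 < d) (hxmono : StrictMono x) (hx0 : x 0 = 0)
    (hT0 : ∀ k : Fin d, T ((x k.castSucc : ℝ) : UnitAddCircle) = 0)
    (hι : ∀ z : UnitAddCircle, ∀ n : ℕ, ∀ kk : Fin d,
        ι z n = kk ↔ rep (T^[n] z) ∈ Ico (x kk.castSucc) (x kk.succ))
    {z₀ : UnitAddCircle} (hz₀ : ∀ N : ℕ, ∃ n ≥ N, ((ι z₀ n : ℕ) ≠ 0)) (n : ℕ) :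
    x (ι z₀ n).castSucc < rep (T^[n] z₀) := by
  refine ((hι z₀ n _).1 rfl).1.lt_of_ne fun h => ?_
  obtain ⟨m, hnm, hm⟩ := hz₀ (n + 1)
  exact hm <| itinerary_eventually_zero_of_iterate_eq_left_endpoint hd hxmono hx0 hT0 hι
    (by rw [h, coe_rep]) hnm

end Itinerary

theorem itinerary_continuous_at_general
    (d : ℕ) (hd : 0 < d)
    (x : Fin (d + 1) → ℝ) (hxmono : StrictMono x)
    (hx0 : x 0 = 0)
    (T : UnitAddCircle → UnitAddCircle) (hT : Continuous T)
    (hT0 : ∀ k : Fin d, T ((x k.castSucc : ℝ) : UnitAddCircle) = 0)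
    (ι : UnitAddCircle → ℕ → Fin d)
    (hι : ∀ z : UnitAddCircle, ∀ n : ℕ, ∀ kk : Fin d,
        ι z n = kk ↔ rep (T^[n] z) ∈ Set.Ico (x kk.castSucc) (x kk.succ))
    (z₀ : UnitAddCircle) (hz₀ : ∀ N : ℕ, ∃ n ≥ N, ((ι z₀ n : ℕ) ≠ 0)) :
    ContinuousAt ι z₀ := by
  refine continuousAt_pi.2 fun n => ?_
  set k := ι z₀ n
  have hlow : 0 ≤ x k.castSucc := hx0 ▸ hxmono.monotone (Fin.zero_le _)
  have hmem : rep (T^[n] z₀) ∈ Ioo (x k.castSucc) (x k.succ) :=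
    ⟨left_endpoint_lt_rep_iterate hd hxmono hx0 hT0 hι hz₀ n, ((hι z₀ n k).1 rfl).2⟩
  have hnear : ∀ᶠ z in 𝓝 z₀, rep (T^[n] z) ∈ Ioo (x k.castSucc) (x k.succ) :=
    (hT.iterate n).continuousAt.eventually (eventually_rep_mem_Ioo hlow hmem)
  exact continuousAt_const.congr <|
    hnear.mono fun z hz => ((hι z n k).2 (Ioo_subset_Ico_self hz)).symm

theorem itinerary_continuous_at
    (d : ℕ) (hd : 0 < d)
    (x : Fin (d + 1) → ℝ) (hxmono : StrictMono x)
    (hx0 : x 0 = 0) (hx1 : x (Fin.last d) = 1)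
    (T : UnitAddCircle → UnitAddCircle) (hT : Continuous T)
    (hTmono : ∀ k : Fin d, ∀ r s : ℝ,
        r ∈ Set.Ico (x k.castSucc) (x k.succ) → s ∈ Set.Ico (x k.castSucc) (x k.succ) →
        r ≤ s → rep (T ((r : ℝ) : UnitAddCircle)) ≤ rep (T ((s : ℝ) : UnitAddCircle)))
    (hT0 : ∀ k : Fin d, T ((x k.castSucc : ℝ) : UnitAddCircle) = 0)
    (hT1 : ∀ k : Fin d, Tendsto (fun r : ℝ => rep (T ((r : ℝ) : UnitAddCircle)))
        (nhdsWithin (x k.succ) (Set.Iio (x k.succ))) (nhds 1))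
    (ι : UnitAddCircle → ℕ → Fin d)
    (hι : ∀ z : UnitAddCircle, ∀ n : ℕ, ∀ kk : Fin d,
        ι z n = kk ↔ rep (T^[n] z) ∈ Set.Ico (x kk.castSucc) (x kk.succ))
    (z₀ : UnitAddCircle) (hz₀ : ∀ N : ℕ, ∃ n ≥ N, ((ι z₀ n : ℕ) ≠ 0)) :
    ContinuousAt ι z₀ :=
  itinerary_continuous_at_general d hd x hxmono hx0 T hT hT0 ι hι z₀ hz₀
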